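/- arXiv:0708.1859 — 3 statements merged into one kernel-verified Lean document; each statement's English description precedes it below -/
import Mathlib

section
/- Let p be a natural number and let c_0, c_1, ..., c_p be real numbers. Define the trigonometric polynomial c(ω) = Σ_{j=0}^{p} c_j e^{-i j ω} (a complex-valued function of ω ∈ ℝ). Then (1/(2π)) ∫_{-π/2}^{π/2} |c(ω)|² dω = (1/2) Σ_{i=0}^{p} Σ_{j=0}^{p} sinc((i-j)/2) · c_i · c_j. -/
/-! Expanding `|c(ω)|² = c(ω) · conj c(ω)` turns the integrand into `∑ᵢ ∑ⱼ cᵢ cⱼ cos((i - j) ω)`,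
and integrating `cos(k ω)` over `[-π/2, π/2]` gives `π sinc(k / 2)`. -/

open Real MeasureTheory Finset

/-- The normalized sinc function: `sinc x = sin (π x) / (π x)` for `x ≠ 0`, and `sinc 0 = 1`. -/
noncomputable def sinc (x : ℝ) : ℝ := if x = 0 then 1 else Real.sin (Real.pi * x) / (Real.pi * x)

open ComplexConjugate

theorem sq_norm_sum_eq_sum_sum_re_mul_conj {ι : Type*} (s : Finset ι) (z : ι → ℂ) :
    ‖∑ i ∈ s, z i‖ ^ 2 = ∑ i ∈ s, ∑ j ∈ s, (z i * conj (z j)).re := by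
  simp_rw [← Complex.re_sum, ← sum_mul_sum, ← map_sum, Complex.mul_conj,
    Complex.normSq_eq_norm_sq]
  norm_cast

theorem re_ofReal_mul_exp_mul_conj (a b x y : ℝ) :
    (a * Complex.exp (-Complex.I * x) * conj (b * Complex.exp (-Complex.I * y))).re
      = a * b * Real.cos (x - y) := by
  have h : a * Complex.exp (-Complex.I * x) * conj (b * Complex.exp (-Complex.I * y))
      = (a * b : ℝ) * Complex.exp ((y - x : ℝ) * Complex.I) := by
    rw [map_mul, Complex.conj_ofReal, ← Complex.exp_conj, mul_mul_mul_comm, ← Complex.exp_add]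
    simp only [map_mul, map_neg, Complex.conj_I, Complex.conj_ofReal]
    push_cast
    ring_nf
  rw [h, Complex.re_ofReal_mul, Complex.exp_ofReal_mul_I_re, ← neg_sub, Real.cos_neg]

theorem sq_norm_sum_ofReal_mul_exp (s : Finset ℕ) (c : ℕ → ℝ) (ω : ℝ) :
    ‖∑ j ∈ s, (c j : ℂ) * Complex.exp (-Complex.I * (j : ℂ) * (ω : ℂ))‖ ^ 2
      = ∑ i ∈ s, ∑ j ∈ s, c i * c j * Real.cos (((i : ℝ) - j) * ω) := by
  rw [sq_norm_sum_eq_sum_sum_re_mul_conj]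
  refine sum_congr rfl fun i _ => sum_congr rfl fun j _ => ?_
  simpa only [mul_assoc, Complex.ofReal_mul, Complex.ofReal_natCast, sub_mul]
    using re_ofReal_mul_exp_mul_conj (c i) (c j) (i * ω) (j * ω)

theorem integral_cos_mul_symm (k a : ℝ) :
    ∫ ω in -a..a, Real.cos (k * ω) = 2 * a * _root_.sinc (k * a / π) := by
  by_cases hka : k * a = 0
  · rw [_root_.sinc, if_pos (by simp [hka])]
    rcases mul_eq_zero.1 hka with rfl | rfl
    · simp only [zero_mul, cos_zero, intervalIntegral.integral_const, smul_eq_mul]; ring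
    · simp
  · obtain ⟨hk, ha⟩ := mul_ne_zero_iff.1 hka
    rw [intervalIntegral.integral_comp_mul_left (fun x => Real.cos x) hk, integral_cos,
      _root_.sinc, if_neg (div_ne_zero hka pi_ne_zero), mul_neg, Real.sin_neg, smul_eq_mul]
    field_simp
    ring

/-- In-band noise power of the noise-shaping filter with real coefficients `c 0, …, c p`:
`(1/(2π)) ∫_{-π/2}^{π/2} |c(ω)|² dω = (1/2) ∑_i ∑_j sinc((i-j)/2) c_i c_j`. -/
theorem inband_power_eq_double_sum (p : ℕ) (c : ℕ → ℝ) :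
    (1 / (2 * Real.pi)) *
      ∫ ω in (-(Real.pi / 2))..(Real.pi / 2),
        (‖∑ j ∈ Finset.range (p + 1),
          (c j : ℂ) * Complex.exp (-Complex.I * (j : ℂ) * (ω : ℂ))‖) ^ 2
    = (1 / 2) * ∑ i ∈ Finset.range (p + 1), ∑ j ∈ Finset.range (p + 1),
        _root_.sinc (((i : ℝ) - (j : ℝ)) / 2) * c i * c j := by
  have hcont : ∀ {f : ℝ → ℝ}, Continuous f → IntervalIntegrable f volume (-(π / 2)) (π / 2) :=
    fun hf => hf.intervalIntegrable _ _
  simp_rw [sq_norm_sum_ofReal_mul_exp]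
  rw [intervalIntegral.integral_finsetSum fun i _ => hcont (by fun_prop), mul_sum, mul_sum]
  refine sum_congr rfl fun i _ => ?_
  rw [intervalIntegral.integral_finsetSum fun j _ => hcont (by fun_prop), mul_sum, mul_sum]
  refine sum_congr rfl fun j _ => ?_
  rw [intervalIntegral.integral_const_mul, integral_cos_mul_symm,
    show ((i : ℝ) - j) * (π / 2) / π = ((i : ℝ) - j) / 2 by field_simp]
  field_simp
end

section
/- Let σ_X > 0, σ_E > 0 and δ ≥ 1. Define the rate R = (1/2) log₂( (σ_X² + σ_E²(δ + δ⁻¹)/2) / σ_E² ), the side distortion d_s = σ_X² σ_E² (δ + δ⁻¹) / (2σ_X² + σ_E²(δ + δ⁻¹)), the central distortion d_c = σ_X² σ_E² δ⁻¹ / (2σ_X² + σ_E² δ⁻¹), and set Π = (1 − d_s/σ_X²)² and Δ = d_s²/σ_X⁴ − 2^{-4R}. Then d_c = σ_X² · 2^{-4R} / (1 − (√Π − √Δ)²), i.e., the central distortion of the Delta-Sigma quantization scheme meets Ozarow's lower bound with equality. -/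
open Real

/-!
With `M = σ_X² + σ_E²(δ + δ⁻¹)/2` the rate gives `2^{-4R} = σ_E⁴/M²`, and both square roots in
Ozarow's bound are explicit: `√Π = σ_X²/M` and, since `(δ + δ⁻¹)² - 4 = (δ - δ⁻¹)²`,
`√Δ = σ_E²(δ - δ⁻¹)/(2M)` (this is where `δ ≥ 1` enters). The denominator of the bound is then a
difference of squares, `1 - (√Π - √Δ)² = σ_E²δ(2σ_X² + σ_E²δ⁻¹)/M²`, and the bound collapses to `d_c`.
-/

theorem Real.rpow_neg_four_mul_half_logb {b x : ℝ} (hb : 0 < b) (hb₁ : b ≠ 1) (hx : 0 < x) :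
    b ^ (-(4 * (1 / 2 * logb b x))) = (x ^ 2)⁻¹ := by
  rw [show -(4 * (1 / 2 * logb b x)) = -(logb b x * 2) by ring, rpow_neg hb.le,
    rpow_mul hb.le, rpow_logb hb hb₁ hx, rpow_two]

namespace DeltaSigma

variable {a e δ : ℝ}

theorem one_sub_side_div {s : ℝ} (ha : a ≠ 0) (hM : 2 * a + e * s ≠ 0) :
    1 - a * e * s / (2 * a + e * s) / a = a / (a + e * s / 2) := by
  rw [mul_assoc, mul_div_assoc, mul_div_cancel_left₀ _ ha]
  field_simp
  ring

theorem side_sq_sub_rate (ha : a ≠ 0) (hδ : δ ≠ 0) (hM : a + e * (δ + δ⁻¹) / 2 ≠ 0) :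
    (a * e * (δ + δ⁻¹) / (2 * a + e * (δ + δ⁻¹))) ^ 2 / a ^ 2 - e ^ 2 / (a + e * (δ + δ⁻¹) / 2) ^ 2
      = (e * (δ - δ⁻¹) / (2 * (a + e * (δ + δ⁻¹) / 2))) ^ 2 := by
  have hM' : 2 * a + e * (δ + δ⁻¹) ≠ 0 := by contrapose! hM; linarith
  field_simp
  ring

theorem central_eq_ozarow (ha : 0 < a) (he : 0 < e) (hδ : 0 < δ) :
    a * e * δ⁻¹ / (2 * a + e * δ⁻¹)
      = a * (e ^ 2 / (a + e * (δ + δ⁻¹) / 2) ^ 2) /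
        (1 - (a / (a + e * (δ + δ⁻¹) / 2) - e * (δ - δ⁻¹) / (2 * (a + e * (δ + δ⁻¹) / 2))) ^ 2) := by
  set M := a + e * (δ + δ⁻¹) / 2 with hM_def
  have hM : 0 < M := by positivity
  have hden : 1 - (a / M - e * (δ - δ⁻¹) / (2 * M)) ^ 2 = e * δ * (2 * a + e * δ⁻¹) / M ^ 2 := by
    rw [hM_def]
    field_simp
    ring
  rw [hden]
  field_simp

end DeltaSigma

open DeltaSigma

/-- Lemma 2 of the paper: the central distortion of the Delta-Sigma quantization scheme meets
Ozarow's lower bound with equality: `d_c = σ_X² 2^{-4R} / (1 − (√Π − √Δ)²)` where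
`Π = (1 − d_s/σ_X²)²` and `Δ = d_s²/σ_X⁴ − 2^{-4R}`. -/
theorem delta_sigma_meets_ozarow (σX σE δ : ℝ) (hX : 0 < σX) (hE : 0 < σE) (hδ : 1 ≤ δ) :
    let R := (1 / 2) * Real.logb 2 ((σX ^ 2 + σE ^ 2 * (δ + δ⁻¹) / 2) / σE ^ 2)
    let ds := σX ^ 2 * σE ^ 2 * (δ + δ⁻¹) / (2 * σX ^ 2 + σE ^ 2 * (δ + δ⁻¹))
    let dc := σX ^ 2 * σE ^ 2 * δ⁻¹ / (2 * σX ^ 2 + σE ^ 2 * δ⁻¹)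
    let Pi' := (1 - ds / σX ^ 2) ^ 2
    let Δ := ds ^ 2 / σX ^ 4 - (2 : ℝ) ^ (-(4 * R))
    dc = σX ^ 2 * (2 : ℝ) ^ (-(4 * R)) / (1 - (Real.sqrt Pi' - Real.sqrt Δ) ^ 2) := by
  intro R ds dc Pi' Δ
  have hδ₀ : 0 < δ := by linarith
  have hδδ : 0 ≤ δ - δ⁻¹ := by linarith [inv_le_one_of_one_le₀ hδ]
  set M := σX ^ 2 + σE ^ 2 * (δ + δ⁻¹) / 2
  have hM : 0 < M := by positivity
  have hrate : (2 : ℝ) ^ (-(4 * R)) = (σE ^ 2) ^ 2 / M ^ 2 := by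
    rw [rpow_neg_four_mul_half_logb two_pos (by norm_num) (by positivity), div_pow, inv_div]
  have hPi : √Pi' = σX ^ 2 / M := by
    simp only [Pi', ds]
    rw [one_sub_side_div (by positivity) (by positivity), sqrt_sq (by positivity)]
  have hΔ : √Δ = σE ^ 2 * (δ - δ⁻¹) / (2 * M) := by
    simp only [Δ]
    rw [show σX ^ 4 = (σX ^ 2) ^ 2 by ring, hrate,
      side_sq_sub_rate (by positivity) hδ₀.ne' hM.ne', sqrt_sq (by positivity)]
  rw [hrate, hPi, hΔ]
  exact central_eq_ozarow (by positivity) (by positivity) hδ₀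
end

section
/- Let σ_X > 0, σ_E > 0 and δ > 0. Define the rate R = (1/2) log₂( (σ_X² + σ_E²(δ + δ⁻¹)/2) / σ_E² ) and the side distortion d_s = σ_X² σ_E² (δ + δ⁻¹) / (2σ_X² + σ_E²(δ + δ⁻¹)). Then d_s ≥ σ_X² · 2^{-2R}, with equality if and only if δ = 1. -/
open Real

/-! With `a = σ_X²`, `b = σ_E²` and `s = δ + δ⁻¹`, the rate gives `2^{-2R} = 2b / (2a + b s)`,
so `d_s - σ_X² 2^{-2R} = a b (s - 2) / (2a + b s)`. The bound is therefore the AM-GM inequality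
`δ + δ⁻¹ ≥ 2`, whose equality case is `δ = 1`. -/

lemma add_inv_sub_two {δ : ℝ} (hδ : δ ≠ 0) : δ + δ⁻¹ - 2 = (δ - 1) ^ 2 / δ := by
  field_simp
  ring

lemma two_le_add_inv_self {δ : ℝ} (hδ : 0 < δ) : 2 ≤ δ + δ⁻¹ := by
  have : 0 ≤ (δ - 1) ^ 2 / δ := by positivity
  linarith [add_inv_sub_two hδ.ne']

lemma add_inv_self_eq_two_iff {δ : ℝ} (hδ : δ ≠ 0) : δ + δ⁻¹ = 2 ↔ δ = 1 := by
  rw [← sub_eq_zero, add_inv_sub_two hδ, div_eq_zero_iff, sq_eq_zero_iff, sub_eq_zero]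
  exact or_iff_left hδ

lemma rpow_neg_two_mul_half_logb {b x : ℝ} (hb₀ : 0 < b) (hb₁ : b ≠ 1) (hx : 0 < x) :
    b ^ (-(2 * ((1 / 2) * logb b x))) = x⁻¹ := by
  rw [show -(2 * ((1 / 2) * logb b x)) = logb b x⁻¹ by rw [logb_inv]; ring,
    rpow_logb hb₀ hb₁ (inv_pos.mpr hx)]

lemma side_distortion_sub_ozarow {a b s : ℝ} (hb : b ≠ 0) (hden : 2 * a + b * s ≠ 0) :
    a * b * s / (2 * a + b * s) - a * ((a + b * s / 2) / b)⁻¹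
      = a * b * (s - 2) / (2 * a + b * s) := by
  have hden' : a + b * s / 2 ≠ 0 := by contrapose! hden; linarith
  field_simp

/-- Ozarow's side-distortion bound is met by the Delta-Sigma quantization scheme:
`d_s ≥ σ_X² 2^{-2R}`, with equality iff `δ = 1`. -/
theorem side_distortion_bound (σX σE δ : ℝ) (hX : 0 < σX) (hE : 0 < σE) (hδ : 0 < δ) :
    let R := (1 / 2) * Real.logb 2 ((σX ^ 2 + σE ^ 2 * (δ + δ⁻¹) / 2) / σE ^ 2)
    let ds := σX ^ 2 * σE ^ 2 * (δ + δ⁻¹) / (2 * σX ^ 2 + σE ^ 2 * (δ + δ⁻¹))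
    ds ≥ σX ^ 2 * (2 : ℝ) ^ (-(2 * R)) ∧
      (ds = σX ^ 2 * (2 : ℝ) ^ (-(2 * R)) ↔ δ = 1) := by
  intro R ds
  have hs : 2 ≤ δ + δ⁻¹ := two_le_add_inv_self hδ
  have hden : 0 < 2 * σX ^ 2 + σE ^ 2 * (δ + δ⁻¹) := by positivity
  have hexcess : ds - σX ^ 2 * (2 : ℝ) ^ (-(2 * R))
      = σX ^ 2 * σE ^ 2 * (δ + δ⁻¹ - 2) / (2 * σX ^ 2 + σE ^ 2 * (δ + δ⁻¹)) := by
    rw [rpow_neg_two_mul_half_logb two_pos (by norm_num) (by positivity)]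
    exact side_distortion_sub_ozarow (by positivity) hden.ne'
  constructor
  · have : 0 ≤ σX ^ 2 * σE ^ 2 * (δ + δ⁻¹ - 2) / (2 * σX ^ 2 + σE ^ 2 * (δ + δ⁻¹)) := by
      have := sub_nonneg.mpr hs
      positivity
    linarith
  · rw [← sub_eq_zero, hexcess, div_eq_zero_iff, or_iff_left hden.ne', mul_eq_zero,
      or_iff_right (by positivity), sub_eq_zero, add_inv_self_eq_two_iff hδ.ne']
end
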